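/- Suppose p ∈ [1,∞), Q : D → [0,∞) is continuous, and γ, δ ≥ 0 are constants with γ + δ < 1, such that for every ξ ∈ D, all continuous inputs u, w : [0,∞) → D, and every solution x of the single-component system with inputs u, w and x(0) = ξ, one has ‖h∘x‖_{[0,t],p} ≤ γ‖h∘u‖_{[0,t],p} + δ‖h∘w‖_{[0,t],p} + Q(ξ) for all t ≥ 0. Then for every n ∈ ℕ, all continuous inputs u, w : [0,∞) → D, every ξ = (ξ_1,…,ξ_n) ∈ D^n, and every solution (x_1,…,x_n) of the string (Σ_n) with these inputs and initial condition ξ, the estimate ‖h∘x_i‖_{[0,t],p} ≤ (γ/(1−γ−δ))‖h∘u‖_{[0,t],p} + (δ/(1−γ−δ))‖h∘w‖_{[0,t],p} + (1/(1−γ−δ))·max_{j=1,…,n} Q(ξ_j) holds for all t ≥ 0 and all i = 1,…,n. -/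
import Mathlib


/-- The `L^p` norm of a signal `y` on the interval `[0, t]`:
`‖y‖_{[0,t],p} = (∫_0^t |y(s)|^p ds)^{1/p}`. -/
noncomputable def lpNorm {m : ℕ} (p : ℝ) (y : ℝ → EuclideanSpace ℝ (Fin m)) (t : ℝ) : ℝ :=
  (∫ s in (0:ℝ)..t, ‖y s‖ ^ p) ^ (1 / p)

/-- Theorem 1: component-wise trajectory-based sufficient conditions for `L^p`
string stability of a bidirectional string, in the case `γ + δ < 1`. -/
theorem string_stability_bidirectional {k m : ℕ}
    (D : Set (EuclideanSpace ℝ (Fin k))) (hDopen : IsOpen D) (hD0 : (0 : EuclideanSpace ℝ (Fin k)) ∈ D)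
    (h : EuclideanSpace ℝ (Fin k) → EuclideanSpace ℝ (Fin m))
    (hhcont : ContinuousOn h D) (hh0 : h 0 = 0)
    (f : EuclideanSpace ℝ (Fin k) → EuclideanSpace ℝ (Fin k) → EuclideanSpace ℝ (Fin k) →
      EuclideanSpace ℝ (Fin k))
    (hf : LocallyLipschitzOn (D ×ˢ D ×ˢ D)
      (fun q : EuclideanSpace ℝ (Fin k) × EuclideanSpace ℝ (Fin k) × EuclideanSpace ℝ (Fin k) =>
        f q.1 q.2.1 q.2.2))
    (p : ℝ) (hp : 1 ≤ p)
    (Q : EuclideanSpace ℝ (Fin k) → ℝ) (hQcont : ContinuousOn Q D) (hQ0 : ∀ ξ ∈ D, 0 ≤ Q ξ)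
    (γ δ : ℝ) (hγ : 0 ≤ γ) (hδ : 0 ≤ δ) (hγδ : γ + δ < 1)
    -- the single-component trajectory estimate (3.2)
    (Hcomp : ∀ ξ ∈ D, ∀ u w : ℝ → EuclideanSpace ℝ (Fin k),
      ContinuousOn u (Set.Ici 0) → ContinuousOn w (Set.Ici 0) →
      (∀ t ≥ (0:ℝ), u t ∈ D) → (∀ t ≥ (0:ℝ), w t ∈ D) →
      ∀ x : ℝ → EuclideanSpace ℝ (Fin k),
        (∀ t ≥ (0:ℝ), x t ∈ D) → x 0 = ξ →
        (∀ t ≥ (0:ℝ), HasDerivAt x (f (u t) (x t) (w t)) t) →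
        ∀ t ≥ (0:ℝ),
          lpNorm p (fun s => h (x s)) t ≤
            γ * lpNorm p (fun s => h (u s)) t + δ * lpNorm p (fun s => h (w s)) t + Q ξ) :
    -- conclusion: the string estimate (2.2) with the explicit gains of Theorem 1
    ∀ (n : ℕ) (hn : 1 ≤ n), ∀ u w : ℝ → EuclideanSpace ℝ (Fin k),
      ContinuousOn u (Set.Ici 0) → ContinuousOn w (Set.Ici 0) →
      (∀ t ≥ (0:ℝ), u t ∈ D) → (∀ t ≥ (0:ℝ), w t ∈ D) →
      ∀ ξ : ℕ → EuclideanSpace ℝ (Fin k), (∀ i, 1 ≤ i → i ≤ n → ξ i ∈ D) →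
      ∀ x : ℕ → ℝ → EuclideanSpace ℝ (Fin k),
        (∀ t, x 0 t = u t) → (∀ t, x (n + 1) t = w t) →
        (∀ i, 1 ≤ i → i ≤ n →
          (∀ t ≥ (0:ℝ), x i t ∈ D) ∧ x i 0 = ξ i ∧
          (∀ t ≥ (0:ℝ), HasDerivAt (x i) (f (x (i - 1) t) (x i t) (x (i + 1) t)) t)) →
        ∀ i, 1 ≤ i → i ≤ n → ∀ t ≥ (0:ℝ),
          lpNorm p (fun s => h (x i s)) t ≤
            (γ / (1 - γ - δ)) * lpNorm p (fun s => h (u s)) t +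
            (δ / (1 - γ - δ)) * lpNorm p (fun s => h (w s)) t +
            (1 / (1 - γ - δ)) *
              ((Finset.Icc 1 n).sup' (Finset.nonempty_Icc.mpr hn) fun j => Q (ξ j)) := by
  intro n hn u w hu hw huD hwD ξ hξ x hx0 hxn1 hxsol i hi1 hin t ht
  have hne : (Finset.Icc 1 n).Nonempty := Finset.nonempty_Icc.mpr hn
  set a : ℕ → ℝ := fun j => lpNorm p (fun s => h (x j s)) t with ha
  have hx0f : x 0 = u := funext hx0
  have hxn1f : x (n + 1) = w := funext hxn1
  -- nonnegativity of lpNorm values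
  have la : ∀ y : ℝ → EuclideanSpace ℝ (Fin m), 0 ≤ lpNorm p y t := by
    intro y
    apply Real.rpow_nonneg
    apply intervalIntegral.integral_nonneg ht
    intro s _
    exact Real.rpow_nonneg (norm_nonneg _) p
  have la' : ∀ j, 0 ≤ a j := fun j => la _
  -- continuity and D-membership of all components 0 ≤ j ≤ n+1
  have hcx : ∀ j ≤ n + 1, ContinuousOn (x j) (Set.Ici 0) ∧ ∀ s ≥ (0:ℝ), x j s ∈ D := by
    intro j hj
    rcases Nat.eq_zero_or_pos j with rfl | hj1
    · rw [hx0f]; exact ⟨hu, huD⟩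
    rcases eq_or_lt_of_le hj with rfl | hjn
    · rw [hxn1f]; exact ⟨hw, hwD⟩
    have hjn' : j ≤ n := Nat.lt_succ_iff.mp hjn
    obtain ⟨hmem, _, hder⟩ := hxsol j hj1 hjn'
    refine ⟨fun s hs => ((hder s hs).continuousAt).continuousWithinAt, hmem⟩
  -- the key recursive estimate
  have key : ∀ j, 1 ≤ j → j ≤ n → a j ≤ γ * a (j - 1) + δ * a (j + 1) + Q (ξ j) := by
    intro j hj1 hjn
    obtain ⟨hmem, hinit, hder⟩ := hxsol j hj1 hjn
    have h1 := hcx (j - 1) (by omega)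
    have h2 := hcx (j + 1) (by omega)
    have hder' : ∀ s ≥ (0:ℝ), HasDerivAt (x j) (f (x (j-1) s) (x j s) (x (j+1) s)) s := hder
    exact Hcomp (ξ j) (hξ j hj1 hjn) (x (j - 1)) (x (j + 1)) h1.1 h2.1 h1.2 h2.2
      (x j) hmem hinit hder' t ht
  -- maximum over the string
  set B : ℝ := (Finset.Icc 1 n).sup' hne a with hBdef
  have hB0 : 0 ≤ B :=
    le_trans (la' 1) (Finset.le_sup' a (Finset.mem_Icc.mpr ⟨le_refl 1, hn⟩))
  set M : ℝ := (Finset.Icc 1 n).sup' hne fun j => Q (ξ j) with hMdef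
  have hBbound : B ≤ γ * (a 0 + B) + δ * (a (n + 1) + B) + M := by
    apply Finset.sup'_le
    intro j hj
    obtain ⟨hj1, hjn⟩ := Finset.mem_Icc.mp hj
    have hQM : Q (ξ j) ≤ M := Finset.le_sup' (fun j => Q (ξ j)) hj
    have hl : a (j - 1) ≤ a 0 + B := by
      rcases eq_or_lt_of_le hj1 with rfl | hj2
      · show a 0 ≤ a 0 + B
        exact le_add_of_nonneg_right hB0
      · have : a (j - 1) ≤ B :=
          Finset.le_sup' a (Finset.mem_Icc.mpr ⟨by omega, by omega⟩)
        linarith [la' 0]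
    have hr : a (j + 1) ≤ a (n + 1) + B := by
      rcases eq_or_lt_of_le hjn with rfl | hj2
      · exact le_add_of_nonneg_right hB0
      · have : a (j + 1) ≤ B :=
          Finset.le_sup' a (Finset.mem_Icc.mpr ⟨by omega, by omega⟩)
        linarith [la' (n + 1)]
    calc a j ≤ γ * a (j - 1) + δ * a (j + 1) + Q (ξ j) := key j hj1 hjn
      _ ≤ γ * (a 0 + B) + δ * (a (n + 1) + B) + M := by
          gcongr
  have haiB : a i ≤ B := Finset.le_sup' a (Finset.mem_Icc.mpr ⟨hi1, hin⟩)
  have hc : (0:ℝ) < 1 - γ - δ := by linarith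
  have hau : lpNorm p (fun s => h (u s)) t = a 0 := by
    rw [show a 0 = lpNorm p (fun s => h (x 0 s)) t from rfl, hx0f]
  have haw : lpNorm p (fun s => h (w s)) t = a (n + 1) := by
    rw [show a (n+1) = lpNorm p (fun s => h (x (n+1) s)) t from rfl, hxn1f]
  rw [hau, haw]
  have hgoal : a i ≤ (γ * a 0 + δ * a (n + 1) + M) / (1 - γ - δ) := by
    rw [le_div_iff₀ hc]
    nlinarith [haiB, hBbound]
  calc a i ≤ (γ * a 0 + δ * a (n + 1) + M) / (1 - γ - δ) := hgoal
    _ = γ / (1 - γ - δ) * a 0 + δ / (1 - γ - δ) * a (n + 1) + 1 / (1 - γ - δ) * M := by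
        field_simp
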